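/- For the simple walk S = {N,S,E,W}, the number of quarter-plane walks of length 2n from the origin back to the origin equals Catalan(n)·Catalan(n+1), i.e., c_{0,0,2n} = C_n · C_{n+1} where C_n = (1/(n+1))·binom(2n,n), and c_{0,0,2n+1} = 0. -/
import Mathlib

open Finset

/-- Number of quarter-plane walks of length `n` with steps in `S`, from the
origin to `p`. -/
noncomputable def quarterWalkCount (S : Finset (ℤ × ℤ)) (n : ℕ) (p : ℤ × ℤ) : ℕ :=
  Nat.card {w : Fin n → ℤ × ℤ //
    (∀ k, w k ∈ S) ∧
    (∀ m : ℕ, m ≤ n →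
      0 ≤ (∑ k : Fin n, if (k : ℕ) < m then w k else 0).1 ∧
      0 ≤ (∑ k : Fin n, if (k : ℕ) < m then w k else 0).2) ∧
    (∑ k : Fin n, w k) = p}

/-- The simple walk step set `{N, S, E, W}`. -/
def simpleSteps : Finset (ℤ × ℤ) := {(0, 1), (0, -1), (1, 0), (-1, 0)}

section Identity
open Nat

lemma catalanQ (k : ℕ) : (catalan k : ℚ) = (2*k)! / (k ! * (k+1)!) := by
  have h := succ_mul_catalan_eq_centralBinom k
  have h2 : ((k+1) * catalan k : ℕ) = ((2*k).choose k) := by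
    rw [h]; rfl
  have h3 : ((2*k).choose k : ℚ) = (2*k)! / (k ! * ((2*k) - k)!) :=
    Nat.cast_choose ℚ (by omega)
  have h4 : 2*k - k = k := by omega
  have h5 : ((k:ℚ)+1) * catalan k = (2*k)! / (k ! * k !) := by
    rw [h4] at h3; rw [← h3]; exact_mod_cast congrArg (Nat.cast (R := ℚ)) h2
  have hk : (k ! : ℚ) ≠ 0 := by exact_mod_cast (Nat.factorial_pos k).ne'
  have hk1 : ((k+1)! : ℚ) ≠ 0 := by exact_mod_cast (Nat.factorial_pos (k+1)).ne'
  have hfs : ((k+1)! : ℚ) = (k+1) * k ! := by exact_mod_cast Nat.factorial_succ k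
  rw [eq_div_iff (by positivity : (k ! : ℚ) * k ! ≠ 0)] at h5
  rw [eq_div_iff (by positivity), hfs]
  linear_combination h5

lemma term_eq (n k : ℕ) (hk : k ≤ n) :
    (((n:ℚ)+1) * ((2*n).choose (2*k)) * catalan k * catalan (n-k))
      = catalan n * ((n+1).choose k) * ((n+1).choose (k+1)) := by
  have e1 : ((2*n).choose (2*k) : ℚ) = (2*n)! / ((2*k)! * (2*(n-k))!) := by
    rw [Nat.cast_choose ℚ (by omega : 2*k ≤ 2*n), show 2*n-2*k = 2*(n-k) from by omega]
  have e2 : ((n+1).choose k : ℚ) = (n+1)! / (k ! * ((n-k)+1)!) := by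
    rw [Nat.cast_choose ℚ (by omega : k ≤ n+1), show n+1-k = (n-k)+1 from by omega]
  have e3 : ((n+1).choose (k+1) : ℚ) = (n+1)! / ((k+1)! * (n-k)!) := by
    rw [Nat.cast_choose ℚ (by omega : k+1 ≤ n+1), show n+1-(k+1) = n-k from by omega]
  rw [e1, e2, e3, catalanQ, catalanQ, catalanQ]
  have f1 : ((n+1)! : ℚ) = (n+1) * n ! := by exact_mod_cast Nat.factorial_succ n
  have f2 : ((k+1)! : ℚ) = (k+1) * k ! := by exact_mod_cast Nat.factorial_succ k
  have f3 : (((n-k)+1)! : ℚ) = ((n-k)+1) * (n-k)! := by exact_mod_cast Nat.factorial_succ (n-k)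
  rw [f1, f2, f3]
  have p1 : (n ! : ℚ) ≠ 0 := by exact_mod_cast (Nat.factorial_pos n).ne'
  have p2 : (k ! : ℚ) ≠ 0 := by exact_mod_cast (Nat.factorial_pos k).ne'
  have p3 : ((n-k)! : ℚ) ≠ 0 := by exact_mod_cast (Nat.factorial_pos (n-k)).ne'
  have p4 : ((2*k)! : ℚ) ≠ 0 := by exact_mod_cast (Nat.factorial_pos (2*k)).ne'
  have p5 : ((2*(n-k))! : ℚ) ≠ 0 := by exact_mod_cast (Nat.factorial_pos (2*(n-k))).ne'
  have p6 : ((n:ℚ)+1) ≠ 0 := by positivity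
  have p7 : ((k:ℚ)+1) ≠ 0 := by positivity
  have p8 : ((n:ℚ)-k+1) ≠ 0 := by
    have : ((n-k : ℕ) : ℚ) = (n:ℚ) - k := by
      push_cast [Nat.cast_sub hk]; ring
    rw [← this]; positivity
  have hnk : ((n-k : ℕ) : ℚ) + 1 ≠ 0 := by positivity
  field_simp

lemma vand (n : ℕ) :
    ∑ k ∈ range (n+1), (n+1).choose k * (n+1).choose (k+1) = (2*n+2).choose n := by
  have h := Nat.add_choose_eq (n+1) (n+1) n
  have h2 : (2*n+2) = (n+1) + (n+1) := by omega
  rw [h2, h, Finset.Nat.sum_antidiagonal_eq_sum_range_succ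
    (fun x y => (n+1).choose x * (n+1).choose y) n]
  refine Finset.sum_congr rfl fun k hk => ?_
  rw [mem_range] at hk
  congr 1
  have : n - k ≤ n + 1 := by omega
  rw [← Nat.choose_symm this]
  congr 1
  omega

lemma succ_mul_catalan_succ (n : ℕ) : (n+1) * catalan (n+1) = (2*n+2).choose n := by
  have h1 : (n+2) * catalan (n+1) = (2*n+2).choose (n+1) := by
    have := succ_mul_catalan_eq_centralBinom (n+1)
    rwa [Nat.centralBinom, show 2*(n+1) = 2*n+2 from by omega] at this
  have h2 : (2*n+2).choose (n+1) * (n+1) = (2*n+2).choose n * (2*n+2 - n) :=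
    Nat.choose_succ_right_eq (2*n+2) n
  have h3 : 2*n+2-n = n+2 := by omega
  rw [h3] at h2
  have key : (n+2) * ((n+1) * catalan (n+1)) = (n+2) * ((2*n+2).choose n) := by
    calc (n+2) * ((n+1) * catalan (n+1)) = ((n+2) * catalan (n+1)) * (n+1) := by ring
    _ = (2*n+2).choose (n+1) * (n+1) := by rw [h1]
    _ = (2*n+2).choose n * (n+2) := h2
    _ = (n+2) * ((2*n+2).choose n) := by ring
  exact Nat.eq_of_mul_eq_mul_left (by omega) key

lemma sum_identity (n : ℕ) :
    ∑ k ∈ range (n+1), (2*n).choose (2*k) * catalan k * catalan (n-k)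
      = catalan n * catalan (n+1) := by
  have hq : ((n:ℚ)+1) * (∑ k ∈ range (n+1), ((2*n).choose (2*k) * catalan k * catalan (n-k) : ℕ) : ℚ)
      = ((n:ℚ)+1) * (catalan n * catalan (n+1) : ℕ) := by
    push_cast
    rw [Finset.mul_sum]
    have : ∀ k ∈ range (n+1), ((n:ℚ)+1) * (((2*n).choose (2*k) : ℚ) * (catalan k : ℚ) * (catalan (n-k) : ℚ))
        = (catalan n : ℚ) * (((n+1).choose k : ℚ) * ((n+1).choose (k+1) : ℚ)) := by
      intro k hk
      rw [mem_range] at hk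
      have := term_eq n k (by omega)
      push_cast at this ⊢
      linear_combination this
    rw [Finset.sum_congr rfl this, ← Finset.mul_sum]
    have : (∑ k ∈ range (n+1), (((n+1).choose k : ℚ) * ((n+1).choose (k+1) : ℚ)))
        = (((2*n+2).choose n : ℕ) : ℚ) := by
      rw [← vand n]; push_cast; rfl
    rw [this, ← succ_mul_catalan_succ n]
    push_cast
    ring
  have := mul_left_cancel₀ (by positivity : ((n:ℚ)+1) ≠ 0) hq
  exact_mod_cast this

end Identity

section DyckPart
open List

def eps (b : Bool) : ℤ := if b then 1 else -1

def mapSum (l : List Bool) : ℤ := (l.map eps).sum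

def IsDyckL (l : List Bool) : Prop := (∀ i, 0 ≤ mapSum (l.take i)) ∧ mapSum l = 0

lemma mapSum_cons (b : Bool) (t : List Bool) : mapSum (b :: t) = eps b + mapSum t := by
  simp [mapSum]

lemma mapSum_eq_counts (l : List Bool) :
    mapSum l = (l.count true : ℤ) - (l.count false : ℤ) := by
  induction l with
  | nil => simp [mapSum]
  | cons b t ih =>
    rw [mapSum_cons, ih]
    cases b <;> simp [eps, List.count_cons] <;> push_cast <;> ring

lemma counts_length (l : List Bool) : l.count true + l.count false = l.length := by
  induction l with
  | nil => simp
  | cons b t ih => cases b <;> simp [List.count_cons] <;> omega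

def toStep (b : Bool) : DyckStep := bif b then DyckStep.U else DyckStep.D
def ofStep (s : DyckStep) : Bool := match s with | DyckStep.U => true | DyckStep.D => false

lemma toStep_inj : Function.Injective toStep := by
  intro a b h; cases a <;> cases b <;> simp [toStep] at h ⊢

lemma ofStep_inj : Function.Injective ofStep := by
  intro a b h; cases a <;> cases b <;> simp [ofStep] at h ⊢

lemma ofStep_toStep : ofStep ∘ toStep = id := by funext b; cases b <;> rfl
lemma toStep_ofStep : toStep ∘ ofStep = id := by funext s; cases s <;> rfl

lemma count_U_map (l : List Bool) : (l.map toStep).count DyckStep.U = l.count true := by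
  simpa [toStep] using List.count_map_of_injective l toStep toStep_inj true

lemma count_D_map (l : List Bool) : (l.map toStep).count DyckStep.D = l.count false := by
  simpa [toStep] using List.count_map_of_injective l toStep toStep_inj false

lemma count_true_map (t : List DyckStep) : (t.map ofStep).count true = t.count DyckStep.U := by
  simpa [ofStep] using List.count_map_of_injective t ofStep ofStep_inj DyckStep.U

lemma count_false_map (t : List DyckStep) : (t.map ofStep).count false = t.count DyckStep.D := by
  simpa [ofStep] using List.count_map_of_injective t ofStep ofStep_inj DyckStep.D

/-- the number of Dyck-type boolean lists of length `L` -/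
noncomputable def dc (L : ℕ) : ℕ := Nat.card {l : List Bool // l.length = L ∧ IsDyckL l}

noncomputable def dyckEquiv (m : ℕ) :
    {l : List Bool // l.length = 2*m ∧ IsDyckL l} ≃ {p : DyckWord // p.semilength = m} where
  toFun := fun ⟨l, hlen, hd⟩ => by
    refine ⟨⟨l.map toStep, ?_, ?_⟩, ?_⟩
    · rw [count_U_map, count_D_map]
      have h0 := mapSum_eq_counts l
      rw [hd.2] at h0
      omega
    · intro i
      rw [← List.map_take, count_U_map, count_D_map]
      have h1 := hd.1 i
      rw [mapSum_eq_counts] at h1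
      omega
    · show List.count DyckStep.U (l.map toStep) = m
      rw [count_U_map]
      have h0 := mapSum_eq_counts l
      rw [hd.2] at h0
      have h2 := counts_length l
      omega
  invFun := fun ⟨p, hp⟩ => by
    refine ⟨p.toList.map ofStep, ?_, ?_, ?_⟩
    · rw [List.length_map, ← p.two_mul_semilength_eq_length, hp]
    · intro i
      rw [← List.map_take, mapSum_eq_counts, count_true_map, count_false_map]
      have := p.count_D_le_count_U i
      omega
    · rw [mapSum_eq_counts, count_true_map, count_false_map]
      have := p.count_U_eq_count_D
      omega
  left_inv := fun ⟨l, hlen, hd⟩ => by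
    apply Subtype.ext
    show (l.map toStep).map ofStep = l
    rw [List.map_map, ofStep_toStep, List.map_id]
  right_inv := fun ⟨p, hp⟩ => by
    apply Subtype.ext
    apply DyckWord.ext
    show (p.toList.map ofStep).map toStep = p.toList
    rw [List.map_map, toStep_ofStep, List.map_id]

lemma dc_even (m : ℕ) : dc (2*m) = catalan m := by
  rw [dc, Nat.card_congr (dyckEquiv m), Nat.card_eq_fintype_card]
  exact DyckWord.card_dyckWord_semilength_eq_catalan m

lemma dc_odd (L : ℕ) (h : ¬ 2 ∣ L) : dc L = 0 := by
  rw [dc]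
  have : IsEmpty {l : List Bool // l.length = L ∧ IsDyckL l} := by
    constructor
    rintro ⟨l, hlen, hd⟩
    have h0 := mapSum_eq_counts l
    rw [hd.2] at h0
    have h2 := counts_length l
    omega
  exact Nat.card_of_isEmpty



def pre (c : ℕ) (g : Fin c → Bool) (m : ℕ) : ℤ :=
  ∑ j : Fin c, if (j : ℕ) < m then eps (g j) else 0

lemma sum_if_take (c : ℕ) (f : Fin c → ℤ) (m : ℕ) :
    (∑ j : Fin c, if (j:ℕ) < m then f j else 0) = ((List.ofFn f).take m).sum := by
  induction m with
  | zero => simp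
  | succ m ih =>
    by_cases hc : m < c
    · have hlen : m < (List.ofFn f).length := by simpa using hc
      rw [List.sum_take_succ _ _ hlen, ← ih]
      have split : ∀ j : Fin c, (if (j:ℕ) < m+1 then f j else 0)
          = (if (j:ℕ) < m then f j else 0) + (if j = ⟨m, hc⟩ then f j else 0) := by
        intro j
        by_cases h1 : (j:ℕ) < m
        · have h2 : j ≠ ⟨m, hc⟩ := by
            intro h; rw [h] at h1; simp at h1
          simp [h1, h2, show (j:ℕ) < m+1 by omega]
        · by_cases h2 : j = ⟨m, hc⟩
          · subst h2; simp [h1]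
          · have h4 : (j:ℕ) ≠ m := fun he => h2 (Fin.ext he)
            have h3 : ¬ ((j:ℕ) < m+1) := by omega
            simp [h1, h2, h3]
      rw [Finset.sum_congr rfl (fun j _ => split j), Finset.sum_add_distrib,
        Finset.sum_ite_eq' Finset.univ (⟨m, hc⟩ : Fin c) f]
      simp [List.get_ofFn]
    · have h1 : ∀ j : Fin c, ((j:ℕ) < m+1) ↔ ((j:ℕ) < m) := by
        intro j; have := j.isLt; omega
      rw [List.take_of_length_le (by simp; omega)]
      rw [List.take_of_length_le (by simp; omega)] at ih
      rw [← ih]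
      exact Finset.sum_congr rfl fun j _ => by rw [if_congr (h1 j) rfl rfl]

lemma pre_eq_mapSum (c : ℕ) (g : Fin c → Bool) (m : ℕ) :
    pre c g m = mapSum ((List.ofFn g).take m) := by
  unfold pre mapSum
  rw [List.map_take, List.map_ofFn]
  exact sum_if_take c (eps ∘ g) m

lemma mapSum_ofFn (c : ℕ) (g : Fin c → Bool) : mapSum (List.ofFn g) = pre c g c := by
  rw [pre_eq_mapSum, List.take_of_length_le (by simp)]

def DFP (c : ℕ) (g : Fin c → Bool) : Prop := (∀ m ≤ c, 0 ≤ pre c g m) ∧ pre c g c = 0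

lemma ofFn_getD {c : ℕ} (l : List Bool) (h : l.length = c) :
    List.ofFn (fun j : Fin c => l.getD (j:ℕ) false) = l := by
  apply List.ext_getElem (by simpa using h.symm)
  intro i h1 h2
  have h3 : i < l.length := h2
  simp [List.getD_eq_getElem, h3]

lemma getD_ofFn {c : ℕ} (g : Fin c → Bool) (j : Fin c) :
    (List.ofFn g).getD (j:ℕ) false = g j := by
  have hj : (j:ℕ) < (List.ofFn g).length := by simp
  rw [List.getD_eq_getElem _ _ hj]
  simp

noncomputable def dfEquiv (c : ℕ) :
    {g : Fin c → Bool // DFP c g} ≃ {l : List Bool // l.length = c ∧ IsDyckL l} where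
  toFun := fun ⟨g, hg⟩ => ⟨List.ofFn g, by simp, by
    intro i
    by_cases hi : i ≤ c
    · rw [← pre_eq_mapSum]; exact hg.1 i hi
    · rw [List.take_of_length_le (by simp; omega), mapSum_ofFn, hg.2], by
    rw [mapSum_ofFn]; exact hg.2⟩
  invFun := fun ⟨l, hlen, hd⟩ => ⟨fun j => l.getD (j:ℕ) false, by
    constructor
    · intro m _
      rw [pre_eq_mapSum, ofFn_getD l hlen]
      exact hd.1 m
    · rw [pre_eq_mapSum, ofFn_getD l hlen, List.take_of_length_le (by omega)]
      exact hd.2⟩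
  left_inv := fun ⟨g, hg⟩ => by
    apply Subtype.ext
    funext j
    exact getD_ofFn g j
  right_inv := fun ⟨l, hlen, hd⟩ => by
    apply Subtype.ext
    exact ofFn_getD l hlen

section Reindex

variable {n : ℕ} (A : Finset (Fin n))

def SA (g : {x : Fin n // x ∈ A} → Bool) (m : ℕ) : ℤ :=
  ∑ k : {x : Fin n // x ∈ A}, if ((k : Fin n) : ℕ) < m then eps (g k) else 0

noncomputable def eA : Fin A.card ≃o {x : Fin n // x ∈ A} := A.orderIsoOfFin rfl

lemma eA_lt_iff (j : Fin A.card) (m : ℕ) :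
    (((eA A j : {x : Fin n // x ∈ A}) : Fin n) : ℕ) < m
      ↔ (j : ℕ) < (A.filter (fun x : Fin n => (x:ℕ) < m)).card := by
  set e := eA A with he
  set B := A.filter (fun x : Fin n => (x:ℕ) < m) with hB
  constructor
  · intro h
    have hmap : ∀ i ∈ Finset.Iic j, ((e i : {x : Fin n // x ∈ A}) : Fin n) ∈ B := by
      intro i hi
      rw [Finset.mem_Iic] at hi
      refine Finset.mem_filter.mpr ⟨(e i).2, ?_⟩
      have h2 : e i ≤ e j := e.le_iff_le.mpr hi
      have h3 : ((e i : Fin n) : ℕ) ≤ ((e j : Fin n) : ℕ) := h2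
      omega
    have hinj : Set.InjOn (fun i : Fin A.card => ((e i : {x : Fin n // x ∈ A}) : Fin n))
        (Finset.Iic j) := by
      intro a _ b _ hab
      exact e.injective (Subtype.ext hab)
    have hc := Finset.card_le_card_of_injOn _ hmap hinj
    rw [Fin.card_Iic] at hc
    omega
  · intro h
    by_contra hcon
    push_neg at hcon
    have hsub : B ⊆ (Finset.Iio j).image (fun i => ((e i : {x : Fin n // x ∈ A}) : Fin n)) := by
      intro x hx
      rw [hB, Finset.mem_filter] at hx
      obtain ⟨hxA, hxm⟩ := hx
      have hij : e.symm ⟨x, hxA⟩ < j := by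
        rw [← e.symm_apply_apply j, e.symm.lt_iff_lt]
        show (⟨x, hxA⟩ : {x : Fin n // x ∈ A}) < e j
        rw [← Subtype.coe_lt_coe, Fin.lt_def]
        show (x : ℕ) < (((e j : {x : Fin n // x ∈ A}) : Fin n) : ℕ)
        omega
      refine Finset.mem_image.mpr ⟨e.symm ⟨x, hxA⟩, Finset.mem_Iio.mpr hij, ?_⟩
      rw [e.apply_symm_apply]
    have hcard := (Finset.card_le_card hsub).trans Finset.card_image_le
    rw [Fin.card_Iio] at hcard
    omega

lemma SA_eq_pre (g : {x : Fin n // x ∈ A} → Bool) (m : ℕ) :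
    SA A g m = pre A.card (g ∘ (eA A)) ((A.filter (fun x : Fin n => (x:ℕ) < m)).card) := by
  rw [SA, pre]
  rw [← Fintype.sum_equiv (eA A).toEquiv
    (fun j => if (((eA A j : {x : Fin n // x ∈ A}) : Fin n) : ℕ) < m then eps (g (eA A j)) else 0)
    (fun k => if ((k : Fin n) : ℕ) < m then eps (g k) else 0) (fun j => rfl)]
  refine Finset.sum_congr rfl fun j _ => ?_
  rw [if_congr (eA_lt_iff A j m) rfl rfl]
  rfl

lemma filter_lt_self_card : (A.filter (fun x : Fin n => (x:ℕ) < n)).card = A.card := by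
  rw [Finset.filter_true_of_mem fun x _ => x.isLt]

lemma filter_lt_eA (j : Fin A.card) :
    (A.filter (fun x : Fin n => (x:ℕ) < ((eA A j : {x : Fin n // x ∈ A}) : Fin n))).card = (j:ℕ) := by
  set a := (((eA A j : {x : Fin n // x ∈ A}) : Fin n) : ℕ)
  have h1 : ¬ ((j:ℕ) < (A.filter (fun x : Fin n => (x:ℕ) < a)).card) := by
    rw [← eA_lt_iff A j a]
    omega
  rcases Nat.eq_zero_or_pos (j:ℕ) with hj | hj
  · omega
  · have hlt : ((j:ℕ) - 1) < A.card := by have := j.isLt; omega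
    have h2 : ((⟨(j:ℕ)-1, hlt⟩ : Fin A.card) : ℕ) < (A.filter (fun x : Fin n => (x:ℕ) < a)).card := by
      rw [← eA_lt_iff A ⟨(j:ℕ)-1, hlt⟩ a]
      have hlt2 : eA A ⟨(j:ℕ)-1, hlt⟩ < eA A j := by
        rw [(eA A).lt_iff_lt]
        rw [Fin.lt_def]
        show (j:ℕ)-1 < (j:ℕ)
        omega
      have h4 : ((eA A ⟨(j:ℕ)-1, hlt⟩ : {x : Fin n // x ∈ A}) : Fin n)
          < ((eA A j : {x : Fin n // x ∈ A}) : Fin n) := hlt2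
      rw [Fin.lt_def] at h4
      exact h4
    have h2' : (j:ℕ)-1 < (A.filter (fun x : Fin n => (x:ℕ) < a)).card := h2
    omega

def VAP (g : {x : Fin n // x ∈ A} → Bool) : Prop :=
  (∀ m ≤ n, 0 ≤ SA A g m) ∧ SA A g n = 0

lemma vap_iff (g : {x : Fin n // x ∈ A} → Bool) :
    VAP A g ↔ DFP A.card (g ∘ (eA A)) := by
  constructor
  · rintro ⟨h1, h2⟩
    constructor
    · intro m' hm'
      rcases eq_or_lt_of_le hm' with hc | hc
      · subst hc
        have := h1 n le_rfl
        rw [SA_eq_pre, filter_lt_self_card A] at this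
        exact this
      · set a := (((eA A ⟨m', hc⟩ : {x : Fin n // x ∈ A}) : Fin n) : ℕ)
        have ha : a ≤ n := le_of_lt (((eA A ⟨m', hc⟩ : {x : Fin n // x ∈ A}) : Fin n)).isLt
        have := h1 a ha
        rw [SA_eq_pre] at this
        rwa [filter_lt_eA A ⟨m', hc⟩] at this
    · have := h2
      rw [SA_eq_pre, filter_lt_self_card A] at this
      exact this
  · rintro ⟨h1, h2⟩
    constructor
    · intro m _
      rw [SA_eq_pre]
      exact h1 _ (Finset.card_filter_le _ _)
    · rw [SA_eq_pre, filter_lt_self_card A]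
      exact h2

noncomputable def vaEquiv :
    {g : {x : Fin n // x ∈ A} → Bool // VAP A g} ≃ {b : Fin A.card → Bool // DFP A.card b} where
  toFun := fun ⟨g, hg⟩ => ⟨g ∘ (eA A), (vap_iff A g).mp hg⟩
  invFun := fun ⟨b, hb⟩ => ⟨b ∘ (eA A).symm, by
    apply (vap_iff A _).mpr
    have : (b ∘ (eA A).symm) ∘ (eA A) = b := by
      funext x; simp
    rwa [this]⟩
  left_inv := fun ⟨g, hg⟩ => by
    apply Subtype.ext
    funext x; simp
  right_inv := fun ⟨b, hb⟩ => by
    apply Subtype.ext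
    funext x; simp

section Walk


def pairToStep (b : Bool × Bool) : ℤ × ℤ := if b.1 then (eps b.2, 0) else (0, eps b.2)
def stepToPair (s : ℤ × ℤ) : Bool × Bool := (decide (s.1 ≠ 0), decide (0 < s.1 + s.2))

lemma mem_simpleSteps (s : ℤ × ℤ) :
    s ∈ simpleSteps ↔ s = (0,1) ∨ s = (0,-1) ∨ s = (1,0) ∨ s = (-1,0) := by
  simp [simpleSteps]

lemma pairToStep_mem (b : Bool × Bool) : pairToStep b ∈ simpleSteps := by
  rcases b with ⟨h, p⟩
  cases h <;> cases p <;> simp [pairToStep, eps, mem_simpleSteps]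

lemma stepToPair_pairToStep (b : Bool × Bool) : stepToPair (pairToStep b) = b := by
  rcases b with ⟨h, p⟩
  cases h <;> cases p <;> simp [pairToStep, stepToPair, eps]

lemma pairToStep_stepToPair {s : ℤ × ℤ} (hs : s ∈ simpleSteps) :
    pairToStep (stepToPair s) = s := by
  rw [mem_simpleSteps] at hs
  rcases hs with rfl | rfl | rfl | rfl <;> simp [pairToStep, stepToPair, eps]

lemma pairToStep_fst (b : Bool × Bool) :
    (pairToStep b).1 = if b.1 = true then eps b.2 else 0 := by
  rcases b with ⟨h, p⟩; cases h <;> rfl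

lemma pairToStep_snd (b : Bool × Bool) :
    (pairToStep b).2 = if b.1 = false then eps b.2 else 0 := by
  rcases b with ⟨h, p⟩; cases h <;> rfl

variable {n : ℕ}

def Xv (v : Fin n → Bool × Bool) (m : ℕ) : ℤ :=
  ∑ k : Fin n, if (k:ℕ) < m ∧ (v k).1 = true then eps (v k).2 else 0

def Yv (v : Fin n → Bool × Bool) (m : ℕ) : ℤ :=
  ∑ k : Fin n, if (k:ℕ) < m ∧ (v k).1 = false then eps (v k).2 else 0

def CV (v : Fin n → Bool × Bool) : Prop :=
  (∀ m ≤ n, 0 ≤ Xv v m ∧ 0 ≤ Yv v m) ∧ Xv v n = 0 ∧ Yv v n = 0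

lemma sum_fst (v : Fin n → Bool × Bool) (m : ℕ) :
    (∑ k : Fin n, if (k:ℕ) < m then pairToStep (v k) else 0).1 = Xv v m := by
  rw [Prod.fst_sum, Xv]
  refine Finset.sum_congr rfl fun k _ => ?_
  rw [apply_ite Prod.fst, pairToStep_fst]
  by_cases h1 : (k:ℕ) < m <;> by_cases h2 : (v k).1 = true <;> simp [h1, h2]

lemma sum_snd (v : Fin n → Bool × Bool) (m : ℕ) :
    (∑ k : Fin n, if (k:ℕ) < m then pairToStep (v k) else 0).2 = Yv v m := by
  rw [Prod.snd_sum, Yv]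
  refine Finset.sum_congr rfl fun k _ => ?_
  rw [apply_ite Prod.snd, pairToStep_snd]
  by_cases h1 : (k:ℕ) < m <;> by_cases h2 : (v k).1 = false <;> simp [h1, h2]

lemma sum_total (v : Fin n → Bool × Bool) :
    (∑ k : Fin n, pairToStep (v k)) = (Xv v n, Yv v n) := by
  have h : (∑ k : Fin n, pairToStep (v k))
      = ∑ k : Fin n, if (k:ℕ) < n then pairToStep (v k) else 0 := by
    refine Finset.sum_congr rfl fun k _ => ?_
    rw [if_pos k.isLt]
  rw [h, Prod.ext_iff]
  exact ⟨by rw [sum_fst], by rw [sum_snd]⟩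

/-- the set of quarter-plane walks as a subtype -/
def WalkT (n : ℕ) : Type := {w : Fin n → ℤ × ℤ //
    (∀ k, w k ∈ simpleSteps) ∧
    (∀ m : ℕ, m ≤ n →
      0 ≤ (∑ k : Fin n, if (k : ℕ) < m then w k else 0).1 ∧
      0 ≤ (∑ k : Fin n, if (k : ℕ) < m then w k else 0).2) ∧
    (∑ k : Fin n, w k) = ((0 : ℤ), (0 : ℤ))}

noncomputable def wEquiv (n : ℕ) : WalkT n ≃ {v : Fin n → Bool × Bool // CV v} where
  toFun := fun ⟨w, hw⟩ => ⟨fun k => stepToPair (w k), by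
    have hrw : ∀ k, pairToStep (stepToPair (w k)) = w k :=
      fun k => pairToStep_stepToPair (hw.1 k)
    have hX : ∀ m, Xv (fun k => stepToPair (w k)) m
        = (∑ k : Fin n, if (k:ℕ) < m then w k else 0).1 := by
      intro m
      rw [← sum_fst]
      congr 1
      refine Finset.sum_congr rfl fun k _ => ?_
      rw [hrw k]
    have hY : ∀ m, Yv (fun k => stepToPair (w k)) m
        = (∑ k : Fin n, if (k:ℕ) < m then w k else 0).2 := by
      intro m
      rw [← sum_snd]
      congr 1
      refine Finset.sum_congr rfl fun k _ => ?_
      rw [hrw k]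
    refine ⟨fun m hm => ⟨?_, ?_⟩, ?_, ?_⟩
    · rw [hX]; exact (hw.2.1 m hm).1
    · rw [hY]; exact (hw.2.1 m hm).2
    · rw [hX]
      have h := hw.2.2
      have : (∑ k : Fin n, if (k:ℕ) < n then w k else 0) = ∑ k : Fin n, w k := by
        refine Finset.sum_congr rfl fun k _ => ?_
        rw [if_pos k.isLt]
      rw [this, h]
    · rw [hY]
      have h := hw.2.2
      have : (∑ k : Fin n, if (k:ℕ) < n then w k else 0) = ∑ k : Fin n, w k := by
        refine Finset.sum_congr rfl fun k _ => ?_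
        rw [if_pos k.isLt]
      rw [this, h]⟩
  invFun := fun ⟨v, hv⟩ => ⟨fun k => pairToStep (v k), by
    refine ⟨fun k => pairToStep_mem (v k), fun m hm => ⟨?_, ?_⟩, ?_⟩
    · rw [sum_fst]; exact (hv.1 m hm).1
    · rw [sum_snd]; exact (hv.1 m hm).2
    · rw [sum_total, hv.2.1, hv.2.2]⟩
  left_inv := fun ⟨w, hw⟩ => by
    apply Subtype.ext
    funext k
    exact pairToStep_stepToPair (hw.1 k)
  right_inv := fun ⟨v, hv⟩ => by
    apply Subtype.ext
    funext k
    exact stepToPair_pairToStep (v k)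

end Walk

section Fiber

variable {n : ℕ}

def maskOf (v : Fin n → Bool × Bool) : Finset (Fin n) :=
  Finset.univ.filter (fun k => (v k).1 = true)

lemma Xv_eq_SA (v : Fin n → Bool × Bool) (A : Finset (Fin n))
    (hmem : ∀ k, (v k).1 = true ↔ k ∈ A) (m : ℕ) :
    Xv v m = SA A (fun k => (v (k : Fin n)).2) m := by
  rw [SA, ← Finset.sum_subtype A (fun k => Iff.rfl)
    (fun k => if (k:ℕ) < m then eps ((v k).2) else 0)]
  have h : (∑ k ∈ A, if (k:ℕ) < m then eps ((v k).2) else 0)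
      = ∑ k : Fin n, if k ∈ A then (if (k:ℕ) < m then eps ((v k).2) else 0) else 0 := by
    rw [Finset.sum_ite_mem, Finset.univ_inter]
  rw [h, Xv]
  refine Finset.sum_congr rfl fun k _ => ?_
  by_cases h2 : k ∈ A
  · have h3 : (v k).1 = true := (hmem k).mpr h2
    by_cases h1 : (k:ℕ) < m <;> simp [h1, h2, h3]
  · have h3 : ¬ ((v k).1 = true) := fun hc => h2 ((hmem k).mp hc)
    by_cases h1 : (k:ℕ) < m <;> simp [h1, h2, h3]

lemma Yv_eq_SA (v : Fin n → Bool × Bool) (A : Finset (Fin n))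
    (hmem : ∀ k, (v k).1 = true ↔ k ∈ A) (m : ℕ) :
    Yv v m = SA Aᶜ (fun k => (v (k : Fin n)).2) m := by
  have hmem' : ∀ k, (v k).1 = false ↔ k ∈ Aᶜ := by
    intro k
    rw [Finset.mem_compl, ← hmem k]
    cases (v k).1 <;> simp
  rw [SA, ← Finset.sum_subtype Aᶜ (fun k => Iff.rfl)
    (fun k => if (k:ℕ) < m then eps ((v k).2) else 0)]
  have h : (∑ k ∈ Aᶜ, if (k:ℕ) < m then eps ((v k).2) else 0)
      = ∑ k : Fin n, if k ∈ Aᶜ then (if (k:ℕ) < m then eps ((v k).2) else 0) else 0 := by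
    rw [Finset.sum_ite_mem, Finset.univ_inter]
  rw [h, Yv]
  refine Finset.sum_congr rfl fun k _ => ?_
  by_cases h2 : k ∈ Aᶜ
  · have h3 : (v k).1 = false := (hmem' k).mpr h2
    by_cases h1 : (k:ℕ) < m <;> simp [h1, h2, h3]
  · have h3 : ¬ ((v k).1 = false) := fun hc => h2 ((hmem' k).mp hc)
    by_cases h1 : (k:ℕ) < m <;> simp [h1, h2, h3]

def mkV (A : Finset (Fin n)) (g : {x : Fin n // x ∈ A} → Bool)
    (g' : {x : Fin n // x ∈ Aᶜ} → Bool) : Fin n → Bool × Bool :=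
  fun k => if h : k ∈ A then (true, g ⟨k, h⟩)
    else (false, g' ⟨k, Finset.mem_compl.mpr h⟩)

lemma mkV_mem (A : Finset (Fin n)) (g) (g') (k : Fin n) :
    (mkV A g g' k).1 = true ↔ k ∈ A := by
  unfold mkV
  by_cases h : k ∈ A <;> simp [h]

lemma mkV_snd_restrict (A : Finset (Fin n)) (g) (g') :
    (fun k : {x : Fin n // x ∈ A} => (mkV A g g' (k : Fin n)).2) = g := by
  funext k
  show (mkV A g g' k.1).2 = g k
  unfold mkV
  rw [dif_pos k.2]

lemma mkV_snd_restrict' (A : Finset (Fin n)) (g) (g') :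
    (fun k : {x : Fin n // x ∈ Aᶜ} => (mkV A g g' (k : Fin n)).2) = g' := by
  funext k
  have hk : (k : Fin n) ∉ A := Finset.mem_compl.mp k.2
  show (mkV A g g' k.1).2 = g' k
  unfold mkV
  rw [dif_neg hk]

noncomputable def fiberEquiv (A : Finset (Fin n)) :
    {vv : {v : Fin n → Bool × Bool // CV v} // maskOf vv.1 = A}
      ≃ {g : {x : Fin n // x ∈ A} → Bool // VAP A g}
        × {g : {x : Fin n // x ∈ Aᶜ} → Bool // VAP Aᶜ g} where
  toFun := fun ⟨⟨v, hv⟩, hmask⟩ => by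
    have hmem : ∀ k, (v k).1 = true ↔ k ∈ A := by
      intro k
      rw [← hmask]
      simp [maskOf]
    exact (⟨fun k => (v (k : Fin n)).2, by
        constructor
        · intro m hm
          rw [← Xv_eq_SA v A hmem m]
          exact (hv.1 m hm).1
        · rw [← Xv_eq_SA v A hmem n]
          exact hv.2.1⟩,
      ⟨fun k => (v (k : Fin n)).2, by
        constructor
        · intro m hm
          rw [← Yv_eq_SA v A hmem m]
          exact (hv.1 m hm).2
        · rw [← Yv_eq_SA v A hmem n]
          exact hv.2.2⟩)
  invFun := fun ⟨⟨g, hg⟩, ⟨g', hg'⟩⟩ => ⟨⟨mkV A g g', by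
      have hX : ∀ m, Xv (mkV A g g') m = SA A g m := by
        intro m
        rw [Xv_eq_SA (mkV A g g') A (mkV_mem A g g') m, mkV_snd_restrict]
      have hY : ∀ m, Yv (mkV A g g') m = SA Aᶜ g' m := by
        intro m
        rw [Yv_eq_SA (mkV A g g') A (mkV_mem A g g') m, mkV_snd_restrict']
      exact ⟨fun m hm => ⟨by rw [hX]; exact hg.1 m hm, by rw [hY]; exact hg'.1 m hm⟩,
        by rw [hX]; exact hg.2, by rw [hY]; exact hg'.2⟩⟩, by
      ext k
      simp [maskOf, mkV_mem]⟩
  left_inv := fun ⟨⟨v, hv⟩, hmask⟩ => by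
    apply Subtype.ext
    apply Subtype.ext
    show mkV A (fun k : {x : Fin n // x ∈ A} => (v (k : Fin n)).2)
      (fun k : {x : Fin n // x ∈ Aᶜ} => (v (k : Fin n)).2) = v
    funext k
    have hmem : ∀ k, (v k).1 = true ↔ k ∈ A := by
      intro k
      rw [← hmask]
      simp [maskOf]
    unfold mkV
    by_cases h : k ∈ A
    · rw [dif_pos h]
      have h1 : (v k).1 = true := (hmem k).mpr h
      exact Prod.ext h1.symm rfl
    · rw [dif_neg h]
      have h1 : (v k).1 = false := by
        have := (hmem k)
        cases hvk : (v k).1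
        · rfl
        · exact absurd ((this).mp hvk) h
      exact Prod.ext h1.symm rfl
  right_inv := fun ⟨⟨g, hg⟩, ⟨g', hg'⟩⟩ => by
    refine Prod.ext ?_ ?_
    · apply Subtype.ext
      show (fun k : {x : Fin n // x ∈ A} => (mkV A g g' (k : Fin n)).2) = g
      exact mkV_snd_restrict A g g'
    · apply Subtype.ext
      show (fun k : {x : Fin n // x ∈ Aᶜ} => (mkV A g g' (k : Fin n)).2) = g'
      exact mkV_snd_restrict' A g g'

end Fiber


section Assemble

lemma nat_card_sigma {ι : Type*} [Fintype ι] (β : ι → Type*) [∀ i, Finite (β i)] :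
    Nat.card (Σ i, β i) = ∑ i, Nat.card (β i) := by
  letI : ∀ i, Fintype (β i) := fun i => Fintype.ofFinite _
  rw [Nat.card_eq_fintype_card, Fintype.card_sigma]
  exact Finset.sum_congr rfl fun i _ => (Nat.card_eq_fintype_card).symm

lemma card_vap {n : ℕ} (A : Finset (Fin n)) :
    Nat.card {g : {x : Fin n // x ∈ A} → Bool // VAP A g} = dc A.card := by
  rw [Nat.card_congr (vaEquiv A), Nat.card_congr (dfEquiv A.card)]
  rfl

lemma card_V (n : ℕ) :
    Nat.card {v : Fin n → Bool × Bool // CV v}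
      = ∑ A : Finset (Fin n), dc A.card * dc (n - A.card) := by
  rw [Nat.card_congr (Equiv.sigmaFiberEquiv
    (fun vv : {v : Fin n → Bool × Bool // CV v} => maskOf vv.1)).symm]
  rw [nat_card_sigma]
  refine Finset.sum_congr rfl fun A _ => ?_
  rw [Nat.card_congr (fiberEquiv A), Nat.card_prod, card_vap, card_vap,
    Finset.card_compl, Fintype.card_fin]

lemma walk_card (n : ℕ) :
    Nat.card (WalkT n) = ∑ k ∈ Finset.range (n+1), n.choose k * (dc k * dc (n-k)) := by
  rw [Nat.card_congr (wEquiv n), card_V]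
  have h := Finset.sum_powerset_apply_card (fun m => dc m * dc (n - m))
    (x := (Finset.univ : Finset (Fin n)))
  rw [Finset.powerset_univ, Finset.card_univ, Fintype.card_fin] at h
  rw [h]
  exact Finset.sum_congr rfl fun k _ => by rw [smul_eq_mul]

/-- for the simple walk, the number of quarter-plane walks of
length `2n` from the origin back to the origin is `Catalan(n)·Catalan(n+1)`,
and there are no such walks of odd length. -/
theorem simple_walk_origin_count (n : ℕ) :
    quarterWalkCount simpleSteps (2 * n) (0, 0) = catalan n * catalan (n + 1) ∧
    quarterWalkCount simpleSteps (2 * n + 1) (0, 0) = 0 := by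
  constructor
  · have h0 : quarterWalkCount simpleSteps (2*n) (0, 0) = Nat.card (WalkT (2*n)) := rfl
    rw [h0, walk_card]
    have hsub : (Finset.range (n+1)).image (fun j => 2*j) ⊆ range (2*n+1) := by
      intro x hx
      rw [Finset.mem_image] at hx
      obtain ⟨j, hj, rfl⟩ := hx
      rw [Finset.mem_range] at hj ⊢
      omega
    have hzero : ∀ x ∈ Finset.range (2*n+1), x ∉ (Finset.range (n+1)).image (fun j => 2*j) →
        (2*n).choose x * (dc x * dc (2*n - x)) = 0 := by
      intro x hx hnx
      have hodd : ¬ 2 ∣ x := by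
        intro hdvd
        obtain ⟨j, rfl⟩ := hdvd
        rw [Finset.mem_range] at hx
        exact hnx (Finset.mem_image.mpr ⟨j, Finset.mem_range.mpr (by omega), rfl⟩)
      rw [dc_odd x hodd]
      ring
    rw [← Finset.sum_subset hsub hzero,
      Finset.sum_image (fun a _ b _ hab => by omega)]
    have hterm : ∀ j ∈ Finset.range (n+1),
        (2*n).choose (2*j) * (dc (2*j) * dc (2*n - 2*j))
          = (2*n).choose (2*j) * catalan j * catalan (n - j) := by
      intro j hj
      rw [Finset.mem_range] at hj
      rw [show 2*n - 2*j = 2*(n-j) from by omega, dc_even, dc_even]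
      ring
    rw [Finset.sum_congr rfl hterm, sum_identity n]
  · have h0 : quarterWalkCount simpleSteps (2*n+1) (0, 0) = Nat.card (WalkT (2*n+1)) := rfl
    rw [h0, walk_card]
    apply Finset.sum_eq_zero
    intro k hk
    rw [Finset.mem_range] at hk
    rcases Nat.even_or_odd k with he | ho
    · obtain ⟨m, hm⟩ := he
      have hodd : ¬ 2 ∣ (2*n+1-k) := by omega
      rw [dc_odd _ hodd]
      ring
    · obtain ⟨m, hm⟩ := ho
      have hodd : ¬ 2 ∣ k := by omega
      rw [dc_odd _ hodd]
      ring

end Assemble
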